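/- arXiv:2009.00755 — 2 statements merged into one kernel-verified Lean document; each statement's English description precedes it below -/
import Mathlib

section
/- For every n ∈ ℕ, the line-rotating Turning Machine L¹_n computes its target configuration (the line of n monomers along direction ρ((1,0))=(0,1) with all states 0); moreover, in every reachable configuration of L¹_n no monomer is blocked. -/
namespace TuringMachineFolding

/-- Points of the triangular grid, coordinatised by `ℤ × ℤ`. -/
abbrev Pt : Type := ℤ × ℤ

/-- The six triangular-grid unit vectors `x, y, w, -x, -y, -w`. -/
def unitVecs : Set Pt :=
  {((1 : ℤ), (0 : ℤ)), (0, 1), (-1, 1), (-1, 0), (0, -1), (1, -1)}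

/-- Anticlockwise rotation by `π/3`: the linear map with `ρ(1,0) = (0,1)`, `ρ(0,1) = (-1,1)`. -/
def rot : Pt → Pt := fun p => (-p.2, p.1 + p.2)

/-- Clockwise rotation by `π/3`, the inverse of `rot`. -/
def rotInv : Pt → Pt := fun p => (p.1 + p.2, -p.1)

/-- `rot` as a permutation of the grid, so that integer powers `rotE ^ t` make sense. -/
def rotE : Equiv.Perm Pt where
  toFun := rot
  invFun := rotInv
  left_inv := by
    rintro ⟨a, b⟩
    simp only [rot, rotInv, Prod.mk.injEq]
    constructor <;> ring
  right_inv := by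
    rintro ⟨a, b⟩
    simp only [rot, rotInv, Prod.mk.injEq]
    constructor <;> ring

/-- Scalar multiple of a grid vector. -/
def zsmulPt (m : ℤ) (p : Pt) : Pt := (m * p.1, m * p.2)

/-- A configuration of a Turning Machine of length `n`: states and positions of the monomers
`m_0, …, m_{n-1}` (indices `≥ n` carry irrelevant junk values), such that `pos m_0 = (0,0)`,
consecutive positions differ by one of the six unit vectors, and positions are pairwise
distinct. -/
structure Config (n : ℕ) where
  st : ℕ → ℤ
  pos : ℕ → Pt
  pos_zero : pos 0 = (0, 0)
  step_unit : ∀ i, i + 1 < n → pos (i + 1) - pos i ∈ unitVecs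
  pos_inj : ∀ i < n, ∀ j < n, pos i = pos j → i = j

/-- The direction of monomer `m_i` (meaningful for `i + 1 < n`). -/
def dir {n : ℕ} (c : Config n) (i : ℕ) : Pt := c.pos (i + 1) - c.pos i

/-- The translation vector applied to the head of `m_i` when the turning rule fires at `m_i`:
`ρ²(d_i)` for a positive state, `ρ⁻²(d_i)` for a negative state. -/
def delta {n : ℕ} (c : Config n) (i : ℕ) : Pt :=
  if 0 < c.st i then rot (rot (dir c i)) else rotInv (rotInv (dir c i))

/-- The state sequence after applying the turning rule at monomer `i`. -/
def nextSt {n : ℕ} (c : Config n) (i : ℕ) : ℕ → ℤ := fun j =>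
  if j = i then (if 0 < c.st i then c.st i - 1 else c.st i + 1) else c.st j

/-- The position sequence after applying the turning rule at monomer `i`. -/
def nextPos {n : ℕ} (c : Config n) (i : ℕ) : ℕ → Pt := fun j =>
  if i < j then c.pos j + delta c i else c.pos j

/-- The turning rule applied at monomer `i` transforms `c` into `c'`.  The requirement that
`c'` is again a `Config` (pairwise distinct positions) encodes that the move is not blocked. -/
def StepAt {n : ℕ} (c : Config n) (i : ℕ) (c' : Config n) : Prop :=
  i < n ∧ c.st i ≠ 0 ∧ (∀ j < n, c'.st j = nextSt c i j) ∧ (∀ j < n, c'.pos j = nextPos c i j)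

/-- The turning rule is applicable to monomer `i` in configuration `c`. -/
def Applicable {n : ℕ} (c : Config n) (i : ℕ) : Prop := ∃ c', StepAt c i c'

/-- Monomer `i` is blocked in `c`: nonzero state, but no applicable rule. -/
def Blocked {n : ℕ} (c : Config n) (i : ℕ) : Prop :=
  i < n ∧ c.st i ≠ 0 ∧ ¬ Applicable c i

/-- One asynchronous step of the machine. -/
def Step {n : ℕ} (c c' : Config n) : Prop := ∃ i, StepAt c i c'

/-- `c` is reachable from `c₀` by a finite sequence of rule applications. -/
def Reachable {n : ℕ} (c₀ c : Config n) : Prop := Relation.ReflTransGen Step c₀ c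

/-- No rule is applicable in `c`. -/
def Terminal {n : ℕ} (c : Config n) : Prop := ∀ i, ¬ Applicable c i

/-- `c` is permanently blocked: some state is nonzero but no monomer admits an applicable rule. -/
def PermBlocked {n : ℕ} (c : Config n) : Prop :=
  (∃ i < n, c.st i ≠ 0) ∧ Terminal c

/-- The Turning Machine with initial configuration `c₀` computes the target configuration `ct`:
every maximal sequence of rule applications from `c₀` is finite and ends in `ct`
(configurations are compared on the meaningful indices `< n`). -/
def Computes {n : ℕ} (c₀ ct : Config n) : Prop :=
  (¬ ∃ f : ℕ → Config n, f 0 = c₀ ∧ ∀ k, Step (f k) (f (k + 1))) ∧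
  ∀ c, Reachable c₀ c → Terminal c → ∀ i < n, c.st i = ct.st i ∧ c.pos i = ct.pos i

/-- The initial configuration with monomers on the x-axis, `pos m_i = (i,0)`, and
initial states `s₀`. -/
def mkInit (n : ℕ) (s₀ : ℕ → ℤ) : Config n where
  st := s₀
  pos := fun i => ((i : ℤ), 0)
  pos_zero := by simp
  step_unit := by
    intro i _
    have h : (((i + 1 : ℕ) : ℤ), (0 : ℤ)) - (((i : ℕ) : ℤ), (0 : ℤ)) = ((1 : ℤ), (0 : ℤ)) := by
      simp only [Prod.mk_sub_mk, Prod.mk.injEq]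
      constructor <;> push_cast <;> ring
    rw [h]
    simp [unitVecs]
  pos_inj := by
    intro i _ j _ h
    have h1 : ((i : ℕ) : ℤ) = ((j : ℕ) : ℤ) := congrArg Prod.fst h
    exact_mod_cast h1

/-- The initial configuration of the line-rotating Turning Machine `L^σ_n`:
`pos m_i = (i,0)`, states `σ` except the last monomer which has state `0`. -/
def lineInit (n : ℕ) (σ : ℤ) : Config n :=
  mkInit n (fun i => if i + 1 = n then 0 else σ)

/-- `Δs`: the number of rule applications made to monomer `i` on the way from `c₀` to `c`
(each application changes the state by one, towards `0`). -/
def dS {n : ℕ} (c₀ c : Config n) (i : ℕ) : ℤ := |c₀.st i - c.st i|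

/-- The set of positions occupied by a configuration. -/
def posSet {n : ℕ} (c : Config n) : Set Pt := {q | ∃ i < n, c.pos i = q}


/-- Adjacency on the triangular grid. -/
def Adj (p q : Pt) : Prop := q - p ∈ unitVecs

/-- The graph induced by the edge relation `E` on the set `S` is connected. -/
def ConnectedIn (E : Pt → Pt → Prop) (S : Set Pt) : Prop :=
  ∀ p ∈ S, ∀ q ∈ S, Relation.ReflTransGen (fun a b => a ∈ S ∧ b ∈ S ∧ E a b) p q

/-- A shape: a finite subset of the grid whose induced graph is connected. -/
def IsShape (S : Set Pt) : Prop := S.Finite ∧ ConnectedIn Adj S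

/-- `y`-monotone shape: the points of each row form a set of consecutive integers. -/
def YMonotone (S : Set Pt) : Prop :=
  ∀ j x₁ x₂ x₃ : ℤ, x₁ ≤ x₂ → x₂ ≤ x₃ → (x₁, j) ∈ S → (x₃, j) ∈ S → (x₂, j) ∈ S

/-- Adjacency along the `x` and `y` axes only. -/
def AdjXY (p q : Pt) : Prop :=
  q - p ∈ ({((1 : ℤ), (0 : ℤ)), (-1, 0), (0, 1), (0, -1)} : Set Pt)

/-- `xy`-connected: connected using only `±x` and `±y` edges. -/
def XYConnected (S : Set Pt) : Prop := ConnectedIn AdjXY S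

/-- The perimeter of a shape: its points having a neighbour outside the shape. -/
def perimeter (S : Set Pt) : Set Pt := {p ∈ S | ∃ v ∈ unitVecs, p + v ∉ S}

/-- Translation of a set of points. -/
def translate (t : Pt) (S : Set Pt) : Set Pt := (fun p => p + t) '' S

/-- The cardinality of the symmetric difference of two sets of points. -/
noncomputable def symmDiffCard (A B : Set Pt) : ℕ := ((A \ B) ∪ (B \ A)).ncard

/-- Error of a configuration w.r.t. a shape: the least cardinality, over all translations `t`,
of the symmetric difference of `S + t` and the set of monomer positions. -/
noncomputable def foldError {n : ℕ} (S : Set Pt) (c : Config n) : ℕ :=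
  sInf {m | ∃ t : Pt, symmDiffCard (translate t S) (posSet c) = m}

/-- The allowed steps of a `yw`-chain. -/
def ywSteps : Set Pt := {((0 : ℤ), (1 : ℤ)), (-1, 1)}

/-- `c 0, …, c (k-1)` is a `yw`-separator of the `y`-monotone shape `S`: a `yw`-chain inside `S`
from the bottommost row of `S` to the topmost row of `S`. -/
def IsYWSep (S : Set Pt) (k : ℕ) (c : ℕ → Pt) : Prop :=
  0 < k ∧ (∀ ℓ, ℓ + 1 < k → c (ℓ + 1) - c ℓ ∈ ywSteps) ∧ (∀ ℓ < k, c ℓ ∈ S) ∧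
    (∀ p ∈ S, (c 0).2 ≤ p.2) ∧ (∀ p ∈ S, p.2 ≤ (c (k - 1)).2)

/-- The shape `S` scaled by a factor `2`. -/
def scale2 (S : Set Pt) : Set Pt :=
  {q | ∃ p ∈ S, ∃ a b : ℤ, (a = 0 ∨ a = 1) ∧ (b = 0 ∨ b = 1) ∧ q = (2 * p.1 + a, 2 * p.2 + b)}

/-- The right boundary of a shape: the rightmost point of each nonempty row. -/
def rightBdry (S : Set Pt) : Set Pt := {p ∈ S | ∀ q ∈ S, q.2 = p.2 → q.1 ≤ p.1}

/-- The left boundary of a shape: the leftmost point of each nonempty row. -/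
def leftBdry (S : Set Pt) : Set Pt := {p ∈ S | ∀ q ∈ S, q.2 = p.2 → p.1 ≤ q.1}

/-- The "almost rectangle" `R_{k'}` from the definition of the `1`-gap spiral. -/
def spiralRing (k : ℤ) : Set Pt :=
  (({p : Pt | (p.2 = 2 * k ∨ p.2 = -(2 * k)) ∧ -(2 * k) ≤ p.1 ∧ p.1 ≤ 2 * k - 1} ∪
      {p : Pt | (p.1 = -(2 * k) ∨ p.1 = 2 * k - 1) ∧ -(2 * k) ≤ p.2 ∧ p.2 ≤ 2 * k}) ∪
      {(2 * k - 2, -(2 * k) + 2), (2 * k, -(2 * k)), (2 * k + 1, -(2 * k))}) \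
    {(2 * k - 1, -(2 * k) + 1)}

/-- The `k`-turn `1`-gap spiral `S_k`. -/
def spiral (k : ℕ) : Set Pt := ⋃ j ∈ Finset.Icc 1 k, spiralRing (j : ℤ)

/-- The base turning numbers `t_i` of the inside-to-outside sequence. -/
def tIn (t0 : ℤ) : ℕ → ℤ
  | 0 => t0
  | i + 1 => tIn t0 i + (if (i + 1) % 2 = 0 then 2 else 1)

/-- The inside-to-outside turning number sequence
`T_in(t₀) = [t₀]¹,[t₁]²,…,[t_{4k}]^{4k+1}, t_{4k}`. -/
def TInList (k : ℕ) (t0 : ℤ) : List ℤ :=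
  ((List.range (4 * k + 1)).flatMap fun i => List.replicate (i + 1) (tIn t0 i)) ++ [tIn t0 (4 * k)]

/-- The base turning numbers `t_i` of the outside-to-inside sequence. -/
def tOut (t0 : ℤ) : ℕ → ℤ
  | 0 => t0
  | i + 1 => tOut t0 i - (if (i + 1) % 2 = 0 then 1 else 2)

/-- The outside-to-inside turning number sequence
`T_out(t₀) = t₀,[t₀]^{4k+1},[t₁]^{4k},…,[t_{4k}]¹`. -/
def TOutList (k : ℕ) (t0 : ℤ) : List ℤ :=
  t0 :: ((List.range (4 * k + 1)).flatMap fun i => List.replicate (4 * k + 1 - i) (tOut t0 i))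

/-- The cross shape with arm length `a`. -/
def cross (a : ℤ) : Set Pt :=
  {p : Pt | p.2 = 0 ∧ -a ≤ p.1 ∧ p.1 ≤ a} ∪ {p : Pt | p.1 = 0 ∧ -a ≤ p.2 ∧ p.2 ≤ a}

/-- A positive zig-zag path: pairwise distinct points with steps in `{x, -x, y, w}`. -/
def PosZigZag (n : ℕ) (p : ℕ → Pt) : Prop :=
  (∀ i < n, ∀ j < n, p i = p j → i = j) ∧
    ∀ i, i + 1 < n → p (i + 1) - p i ∈ ({((1 : ℤ), (0 : ℤ)), (-1, 0), (0, 1), (-1, 1)} : Set Pt)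

/-- A negative zig-zag path: pairwise distinct points with steps in `{x, -x, -y, -w}`. -/
def NegZigZag (n : ℕ) (p : ℕ → Pt) : Prop :=
  (∀ i < n, ∀ j < n, p i = p j → i = j) ∧
    ∀ i, i + 1 < n → p (i + 1) - p i ∈ ({((1 : ℤ), (0 : ℤ)), (-1, 0), (0, -1), (1, -1)} : Set Pt)


/-! Firing `m_i` translates the tail by `ρ²(d_i)`, turning `d_i` into `d_i + ρ²(d_i) = ρ(d_i)` and
leaving every other direction alone. In `L¹_n` every monomer but the last fires exactly once, so
in a reachable configuration the fired monomers point along `y` and the others along `x`. Then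
`pos m_j` has coordinate sum `j`, and since a firing translates by `ρ²(x) = w`, of coordinate sum
`0`, the positions after any firing stay pairwise distinct: nothing is ever blocked. Every firing
lowers `∑ |s(m_j)|`, so every run terminates, necessarily with all states `0`, i.e. on the line
along `y`. -/

lemma add_rot_rot (p : Pt) : p + rot (rot p) = rot p := by
  ext <;> simp only [rot, Prod.fst_add, Prod.snd_add] <;> ring

lemma add_rotInv_rotInv (p : Pt) : p + rotInv (rotInv p) = rotInv p := by
  ext <;> simp only [rotInv, Prod.fst_add, Prod.snd_add] <;> ring

lemma rot_mem_unitVecs {p : Pt} (hp : p ∈ unitVecs) : rot p ∈ unitVecs := by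
  simp only [unitVecs, Set.mem_insert_iff, Set.mem_singleton_iff] at hp ⊢
  rcases hp with rfl | rfl | rfl | rfl | rfl | rfl <;> simp [rot]

lemma rotInv_mem_unitVecs {p : Pt} (hp : p ∈ unitVecs) : rotInv p ∈ unitVecs := by
  simp only [unitVecs, Set.mem_insert_iff, Set.mem_singleton_iff] at hp ⊢
  rcases hp with rfl | rfl | rfl | rfl | rfl | rfl <;> simp [rotInv]

section Step

variable {n : ℕ}

lemma pos_succ (c : Config n) (i : ℕ) : c.pos (i + 1) = c.pos i + dir c i :=
  (add_sub_cancel _ _).symm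

lemma dir_add_delta_mem (c : Config n) {i : ℕ} (hi : i + 1 < n) :
    dir c i + delta c i ∈ unitVecs := by
  have hd : dir c i ∈ unitVecs := c.step_unit i hi
  unfold delta
  split_ifs
  · rw [add_rot_rot]
    exact rot_mem_unitVecs hd
  · rw [add_rotInv_rotInv]
    exact rotInv_mem_unitVecs hd

lemma nextPos_succ_sub (c : Config n) (i j : ℕ) :
    nextPos c i (j + 1) - nextPos c i j = if j = i then dir c i + delta c i else dir c j := by
  unfold nextPos dir
  split_ifs <;> (try subst_vars) <;> first | omega | abel

lemma StepAt.dir_eq {c c' : Config n} {i j : ℕ} (h : StepAt c i c') (hj : j + 1 < n) :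
    dir c' j = if j = i then dir c i + delta c i else dir c j := by
  rw [← nextPos_succ_sub, dir, h.2.2.2 _ hj, h.2.2.2 _ (by omega)]

lemma applicable_of_injective {c : Config n} {i : ℕ} (hi : i < n) (hs : c.st i ≠ 0)
    (hinj : ∀ j < n, ∀ k < n, nextPos c i j = nextPos c i k → j = k) : Applicable c i := by
  refine ⟨⟨nextSt c i, nextPos c i, ?_, fun j hj => ?_, hinj⟩, hi, hs, fun _ _ => rfl,
    fun _ _ => rfl⟩
  · simp [nextPos, c.pos_zero]
  · rw [nextPos_succ_sub]
    split_ifs with hji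
    · exact hji ▸ dir_add_delta_mem c hj
    · exact c.step_unit j hj

def stateWeight (c : Config n) : ℕ := ∑ j ∈ Finset.range n, (c.st j).natAbs

lemma Step.stateWeight_lt {c c' : Config n} (h : Step c c') : stateWeight c' < stateWeight c := by
  obtain ⟨i, hi, hs, hst, -⟩ := h
  have hle : ∀ j < n, (c'.st j).natAbs ≤ (c.st j).natAbs := by
    intro j hj
    rw [hst j hj, nextSt]
    split_ifs <;> (try subst_vars) <;> omega
  refine Finset.sum_lt_sum (fun j hj => hle j (Finset.mem_range.1 hj))
    ⟨i, Finset.mem_range.2 hi, ?_⟩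
  rw [hst i hi, nextSt]
  split_ifs <;> omega

theorem not_exists_infinite_run (c₀ : Config n) :
    ¬ ∃ f : ℕ → Config n, f 0 = c₀ ∧ ∀ k, Step (f k) (f (k + 1)) := by
  rintro ⟨f, -, hf⟩
  exact not_strictAnti_of_wellFoundedLT (stateWeight ∘ f)
    (strictAnti_nat_of_succ_lt fun k => (hf k).stateWeight_lt)

end Step

def lineConfig (n : ℕ) (u : Pt) (hu : u ∈ unitVecs) : Config n where
  st := fun _ => 0
  pos := fun i => zsmulPt i u
  pos_zero := by simp [zsmulPt]
  step_unit := by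
    intro i _
    convert hu using 1
    ext <;> simp only [zsmulPt, Prod.fst_sub, Prod.snd_sub] <;> push_cast <;> ring
  pos_inj := by
    intro i _ j _ h
    simp only [unitVecs, Set.mem_insert_iff, Set.mem_singleton_iff] at hu
    rcases hu with rfl | rfl | rfl | rfl | rfl | rfl <;> simp [zsmulPt] at h <;> omega

structure LineRotInv {n : ℕ} (c : Config n) : Prop where
  st_eq : ∀ i < n, c.st i = 0 ∨ (c.st i = 1 ∧ i + 1 < n)
  dir_of_st_eq_zero : ∀ i, i + 1 < n → c.st i = 0 → dir c i = (0, 1)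
  dir_of_st_eq_one : ∀ i, i + 1 < n → c.st i = 1 → dir c i = (1, 0)

lemma lineRotInv_lineInit (n : ℕ) : LineRotInv (lineInit n 1) where
  st_eq i hi := by
    simp only [lineInit, mkInit]
    split_ifs <;> omega
  dir_of_st_eq_zero i hi hz := by
    simp only [lineInit, mkInit] at hz
    split_ifs at hz <;> omega
  dir_of_st_eq_one i _ _ := by
    ext <;> simp [dir, lineInit, mkInit]

namespace LineRotInv

variable {n : ℕ} {c : Config n}

lemma fst_add_snd_dir (hc : LineRotInv c) {i : ℕ} (hi : i + 1 < n) :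
    (dir c i).1 + (dir c i).2 = 1 := by
  rcases hc.st_eq i (by omega) with h | ⟨h, -⟩
  · simp [hc.dir_of_st_eq_zero i hi h]
  · simp [hc.dir_of_st_eq_one i hi h]

lemma fst_add_snd_pos (hc : LineRotInv c) : ∀ i < n, (c.pos i).1 + (c.pos i).2 = i
  | 0, _ => by simp [c.pos_zero]
  | i + 1, hi => by
    have := hc.fst_add_snd_pos i (by omega)
    have := hc.fst_add_snd_dir hi
    simp only [pos_succ, Prod.fst_add, Prod.snd_add]
    push_cast
    linarith

lemma delta_eq (hc : LineRotInv c) {i : ℕ} (hi : i + 1 < n) (h1 : c.st i = 1) :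
    delta c i = (-1, 1) := by
  simp [delta, h1, hc.dir_of_st_eq_one i hi h1, rot]

lemma applicable (hc : LineRotInv c) {i : ℕ} (hi : i < n) (hs : c.st i ≠ 0) :
    Applicable c i := by
  obtain ⟨h1, hi'⟩ := (hc.st_eq i hi).resolve_left hs
  have hsum : ∀ j < n, (nextPos c i j).1 + (nextPos c i j).2 = j := by
    intro j hj
    rw [← hc.fst_add_snd_pos j hj, nextPos]
    split_ifs
    · simp only [Prod.fst_add, Prod.snd_add, hc.delta_eq hi' h1]
      ring
    · rfl
  refine applicable_of_injective hi hs fun j hj k hk hjk => ?_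
  have := congrArg (fun p : Pt => p.1 + p.2) hjk
  simp only [hsum j hj, hsum k hk] at this
  exact_mod_cast this

lemma stepAt (hc : LineRotInv c) {c' : Config n} {i : ℕ} (h : StepAt c i c') :
    LineRotInv c' := by
  have ⟨hi, hs, hst, _⟩ := h
  obtain ⟨h1, hi'⟩ := (hc.st_eq i hi).resolve_left hs
  have hst' : ∀ j < n, c'.st j = if j = i then 0 else c.st j := by
    intro j hj
    simp [hst j hj, nextSt, h1]
  refine ⟨fun j hj => ?_, fun j hj hz => ?_, fun j hj h1' => ?_⟩
  · rw [hst' j hj]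
    split_ifs
    · exact .inl rfl
    · exact hc.st_eq j hj
  · rw [h.dir_eq hj]
    rw [hst' j (by omega)] at hz
    split_ifs at hz ⊢ with hji
    · rw [hc.dir_of_st_eq_one i hi' h1, hc.delta_eq hi' h1]
      rfl
    · exact hc.dir_of_st_eq_zero j hj hz
  · by_cases hji : j = i
    · rw [hst' j (by omega), if_pos hji] at h1'
      exact absurd h1' zero_ne_one
    · rw [hst' j (by omega), if_neg hji] at h1'
      rw [h.dir_eq hj, if_neg hji]
      exact hc.dir_of_st_eq_one j hj h1'

lemma of_reachable (h : Reachable (lineInit n 1) c) : LineRotInv c := by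
  induction h with
  | refl => exact lineRotInv_lineInit n
  | tail _ hstep ih =>
    obtain ⟨i, hi⟩ := hstep
    exact ih.stepAt hi

lemma st_eq_zero_of_terminal (hc : LineRotInv c) (ht : Terminal c) : ∀ i < n, c.st i = 0 :=
  fun i hi => by_contra fun hs => ht i (hc.applicable hi hs)

lemma pos_eq_of_terminal (hc : LineRotInv c) (ht : Terminal c) :
    ∀ i < n, c.pos i = zsmulPt i (0, 1)
  | 0, _ => by simp [c.pos_zero, zsmulPt]
  | i + 1, hi => by
    rw [pos_succ, hc.pos_eq_of_terminal ht i (by omega),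
      hc.dir_of_st_eq_zero i hi (hc.st_eq_zero_of_terminal ht i (by omega))]
    ext <;> simp [zsmulPt]

end LineRotInv

/-- For every `n`, the line-rotating Turning Machine `L¹_n` computes its
target configuration (the line along `ρ(1,0) = (0,1)` with all states `0`); moreover, in every
reachable configuration of `L¹_n` no monomer is blocked. -/
theorem line_rotate_pi_div_three (n : ℕ) :
    (∃ ct : Config n, Computes (lineInit n 1) ct ∧ (∀ i < n, ct.st i = 0) ∧
        ∀ i < n, ct.pos i = zsmulPt (i : ℤ) (rot (1, 0))) ∧
    ∀ c : Config n, Reachable (lineInit n 1) c → ∀ i, ¬ Blocked c i := by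
  have hy : rot (1, 0) ∈ unitVecs := rot_mem_unitVecs (by simp [unitVecs])
  refine ⟨⟨lineConfig n (rot (1, 0)) hy, ⟨not_exists_infinite_run _, ?_⟩, fun _ _ => rfl,
    fun _ _ => rfl⟩, ?_⟩
  · intro c hr ht i hi
    have hc := LineRotInv.of_reachable hr
    exact ⟨hc.st_eq_zero_of_terminal ht i hi, hc.pos_eq_of_terminal ht i hi⟩
  · rintro c hr i ⟨hi, hs, hna⟩
    exact hna ((LineRotInv.of_reachable hr).applicable hi hs)

end TuringMachineFolding
end

section
/- Let T be a Turning Machine of length n whose initial configuration has pos(m_i)=(i,0) for all i and initial states 0 ≤ s(m_i) ≤ 3 for all i. Then in every reachable configuration of T, the y-coordinates of the monomer positions are nondecreasing along the chain: for all 0 ≤ i ≤ j ≤ n−1, the y-coordinate of pos(m_i) is at most the y-coordinate of pos(m_j). -/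
namespace TuringMachineFolding

/-- The key invariant: states stay in `[0, s₀ i]` and each direction is `ρ^(s₀ i - s i)(x)`. -/
def Inv (n : ℕ) (s₀ : ℕ → ℤ) (c : Config n) : Prop :=
  (∀ i < n, 0 ≤ c.st i ∧ c.st i ≤ s₀ i) ∧
    ∀ i, i + 1 < n → dir c i = (rotE ^ (s₀ i - c.st i)) ((1 : ℤ), (0 : ℤ))

lemma rot_rot_add (d : Pt) : d + rot (rot d) = rot d := by
  rcases d with ⟨a, b⟩
  simp only [rot, Prod.mk_add_mk, Prod.mk.injEq]
  constructor <;> ring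

lemma inv_init (n : ℕ) (s₀ : ℕ → ℤ) (hs : ∀ i < n, 0 ≤ s₀ i ∧ s₀ i ≤ 3) :
    Inv n s₀ (mkInit n s₀) := by
  constructor
  · intro i hi
    exact ⟨(hs i hi).1, le_refl _⟩
  · intro i hi
    have : s₀ i - (mkInit n s₀).st i = 0 := by simp [mkInit]
    rw [this]
    simp only [zpow_zero, Equiv.Perm.coe_one, id_eq]
    show (mkInit n s₀).pos (i + 1) - (mkInit n s₀).pos i = _
    simp only [mkInit, Prod.mk_sub_mk, Prod.mk.injEq]
    constructor <;> [push_cast; skip] <;> ring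

lemma inv_step (n : ℕ) (s₀ : ℕ → ℤ) (c c' : Config n) (h : Inv n s₀ c) (hstep : Step c c') :
    Inv n s₀ c' := by
  obtain ⟨k, hk, hk0, hst, hpos⟩ := hstep
  have hkpos : 0 < c.st k := lt_of_le_of_ne (h.1 k hk).1 (Ne.symm hk0)
  constructor
  · intro i hi
    rw [hst i hi]
    unfold nextSt
    by_cases hik : i = k
    · subst hik
      simp only [if_pos rfl, if_pos hkpos]
      exact ⟨by omega, by have := (h.1 i hi).2; omega⟩
    · rw [if_neg hik]; exact h.1 i hi
  · intro i hi
    have hi' : i < n := by omega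
    have hdir : dir c' i = c'.pos (i + 1) - c'.pos i := rfl
    rw [hdir, hpos (i + 1) hi, hpos i hi']
    unfold nextPos
    have hsti : c'.st i = nextSt c k i := hst i hi'
    rcases lt_trichotomy i k with hik | hik | hik
    · -- i < k : nothing shifted, state unchanged
      rw [if_neg (by omega), if_neg (by omega)]
      have : c'.st i = c.st i := by rw [hsti]; unfold nextSt; rw [if_neg (by omega)]
      rw [this]
      exact h.2 i hi
    · -- i = k : head shifted by delta
      subst hik
      rw [if_pos (by omega), if_neg (by omega)]
      have hdelta : delta c i = rot (rot (dir c i)) := by unfold delta; rw [if_pos hkpos]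
      have hnewst : c'.st i = c.st i - 1 := by
        rw [hsti]; unfold nextSt; rw [if_pos rfl, if_pos hkpos]
      have hexp : s₀ i - c'.st i = 1 + (s₀ i - c.st i) := by rw [hnewst]; ring
      rw [hexp, zpow_add, zpow_one, Equiv.Perm.mul_apply]
      have hd := h.2 i hi
      have : c.pos (i + 1) + delta c i - c.pos i = dir c i + rot (rot (dir c i)) := by
        rw [hdelta]
        show c.pos (i + 1) + _ - c.pos i = c.pos (i + 1) - c.pos i + _
        abel
      rw [this, rot_rot_add, hd]
      rfl
    · -- i > k : both shifted, state unchanged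
      rw [if_pos (by omega), if_pos (by omega)]
      have : c'.st i = c.st i := by rw [hsti]; unfold nextSt; rw [if_neg (by omega)]
      rw [this]
      have : c.pos (i + 1) + delta c k - (c.pos i + delta c k) = c.pos (i + 1) - c.pos i := by
        abel
      rw [this]
      exact h.2 i hi

lemma inv_reachable (n : ℕ) (s₀ : ℕ → ℤ) (hs : ∀ i < n, 0 ≤ s₀ i ∧ s₀ i ≤ 3)
    (c : Config n) (hc : Reachable (mkInit n s₀) c) : Inv n s₀ c := by
  induction hc with
  | refl => exact inv_init n s₀ hs
  | tail _ step ih => exact inv_step n s₀ _ _ ih step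

lemma y_rot_pow (t : ℤ) (h0 : 0 ≤ t) (h3 : t ≤ 3) :
    0 ≤ (((rotE ^ t) ((1 : ℤ), (0 : ℤ))) : Pt).2 := by
  have e1 : (rotE ^ (1 : ℤ)) ((1 : ℤ), (0 : ℤ)) = ((0 : ℤ), (1 : ℤ)) := by
    rw [zpow_one]; rfl
  interval_cases t
  · simp
  · rw [e1]; norm_num
  · rw [show (2 : ℤ) = 1 + 1 from rfl, zpow_add, Equiv.Perm.mul_apply, e1]
    norm_num [rotE, rot]
  · rw [show (3 : ℤ) = 1 + (1 + 1) from rfl, zpow_add, zpow_add,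
      Equiv.Perm.mul_apply, Equiv.Perm.mul_apply, e1]
    norm_num [rotE, rot]

/-- If the initial configuration has `pos m_i = (i,0)` and initial states
`0 ≤ s₀ i ≤ 3`, then in every reachable configuration the `y`-coordinates of the positions
are nondecreasing along the chain. -/
theorem y_monotone_along_chain (n : ℕ) (s₀ : ℕ → ℤ)
    (hs : ∀ i < n, 0 ≤ s₀ i ∧ s₀ i ≤ 3)
    (c : Config n) (hc : Reachable (mkInit n s₀) c) :
    ∀ i j, i ≤ j → j < n → (c.pos i).2 ≤ (c.pos j).2 := by
  have hinv := inv_reachable n s₀ hs c hc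
  have hmono : ∀ i, i + 1 < n → (c.pos i).2 ≤ (c.pos (i + 1)).2 := by
    intro i hi
    have hi' : i < n := by omega
    have hd := hinv.2 i hi
    have h1 := (hinv.1 i hi').1
    have h2 := (hinv.1 i hi').2
    have h3 := (hs i hi').2
    have hy := y_rot_pow (s₀ i - c.st i) (by omega) (by omega)
    rw [← hd] at hy
    have : (dir c i).2 = (c.pos (i + 1)).2 - (c.pos i).2 := rfl
    omega
  intro i j hij
  induction hij with
  | refl => intro _; rfl
  | @step m h ih => intro hj; exact le_trans (ih (by omega)) (hmono m hj)

end TuringMachineFolding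
end
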